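/- For every α ∈ [1/2, (2+√2)/4], setting W := (4 + √2 + √(16α − 16α² − 2))/8, the lower and upper sharpness bounds coincide: √2·(2α − 1) = 2·√((2 + √2 − 4W)·(2W − 1)). -/
import Mathlib


/-- For the optimal witness pair `(α, W_AC^α)`, the lower bound
`√2(2α − 1)` and the upper bound `2√((2 + √2 − 4W)(2W − 1))` on the sharpness
parameter coincide. -/
theorem sharpness_bounds_coincide
    (α : ℝ) (hα : α ∈ Set.Icc (1 / 2 : ℝ) ((2 + Real.sqrt 2) / 4))
    (W : ℝ)
    (hW : W = (4 + Real.sqrt 2 + Real.sqrt (16 * α - 16 * α ^ 2 - 2)) / 8) :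
    Real.sqrt 2 * (2 * α - 1) =
      2 * Real.sqrt ((2 + Real.sqrt 2 - 4 * W) * (2 * W - 1)) := by
  obtain ⟨h1, h2⟩ := hα
  have hs2 : Real.sqrt 2 ^ 2 = 2 := Real.sq_sqrt (by norm_num)
  have harg : (0:ℝ) ≤ 16 * α - 16 * α ^ 2 - 2 := by
    nlinarith [hs2, Real.sqrt_nonneg 2]
  have hss : Real.sqrt (16 * α - 16 * α ^ 2 - 2) ^ 2 = 16 * α - 16 * α ^ 2 - 2 :=
    Real.sq_sqrt harg
  have key : (2 + Real.sqrt 2 - 4 * W) * (2 * W - 1) = (2 * α - 1) ^ 2 / 2 := by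
    subst hW
    nlinarith [hss, hs2]
  rw [key]
  have h21 : (0:ℝ) ≤ 2 * α - 1 := by linarith
  have hsq : Real.sqrt ((2 * α - 1) ^ 2 / 2) = (2 * α - 1) / Real.sqrt 2 := by
    rw [Real.sqrt_div (by positivity), Real.sqrt_sq h21]
  rw [hsq]
  have hpos : Real.sqrt 2 ≠ 0 := by positivity
  field_simp
  nlinarith [hs2]
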